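/- Let G be a tricyclic graph (a connected simple graph on n ≥ 5 vertices with n+2 edges). Then the inverse degree ρ(G) = Σ_{v} 1/deg(v) satisfies (n−4)/2 + 4/3 ≤ ρ(G) ≤ (n−3) + 1/(n−1); the lower bound is attained by a graph with degree sequence (3^4, 2^{n−4}) and the upper bound by a graph with degree sequence (n−1, 3^3, 1^{n−4}). -/

import Mathlib

/-!
Write `d v` for the degrees, so that `∑ d v = 2n + 4`.

For the lower bound, `1 / d ≥ (5 - d) / 6` for every integer `d ≥ 1` (the chord of `1 / x`
through `2` and `3`), and summing gives `ρ ≥ (5n - (2n + 4)) / 6`.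

For the upper bound, let `C` be the set of non-leaves, `m = #C`, `k = n - m`. Each leaf sends
at most one edge into `C`, so `∑_{v ∈ C} d v ≤ m (m - 1) + k`, which forces `m ≥ 4`. On `C` we
bound `1 / d` by its chord over `[b, n - 1]`, a linear function of `d`, so only `∑_{v ∈ C} d v`
matters. If `m ≥ 5` we use `b = 2`. If `m = 4`, the same count applied to `C` minus one vertex
shows that `C` induces a `K₄`, so `b = 3` is allowed, and then the chord bound is exactly
`(n - 3) + 1 / (n - 1)`.
-/

open Finset SimpleGraph

/-- The inverse degree of a graph on `Fin n`: the sum over all vertices of the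
reciprocal of the degree. -/
noncomputable def inverseDegree {n : ℕ} (G : SimpleGraph (Fin n)) : ℝ :=
  ∑ v : Fin n, (1 : ℝ) / ((G.neighborSet v).ncard : ℝ)

/-- `d` (0-indexed) is the degree sequence of `G`: some relabelling of the
vertices realizes the degrees `d 0, …, d (n-1)`. -/
def IsDegreeSequence {n : ℕ} (G : SimpleGraph (Fin n)) (d : ℕ → ℕ) : Prop :=
  ∃ σ : Equiv.Perm (Fin n), ∀ i : Fin n, (G.neighborSet (σ i)).ncard = d (i : ℕ)

lemma five_sub_div_six_le_one_div {d : ℕ} (hd : 1 ≤ d) : (5 - d : ℝ) / 6 ≤ 1 / d := by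
  have hd' : (1 : ℝ) ≤ d := by exact_mod_cast hd
  rw [div_le_div_iff₀ (by norm_num) (by linarith)]
  have : (0 : ℝ) ≤ ((d : ℝ) - 2) * ((d : ℝ) - 3) := by
    rcases Nat.lt_or_ge d 3 with h | h
    · interval_cases d <;> norm_num
    · have : (3 : ℝ) ≤ d := by exact_mod_cast h
      nlinarith
  nlinarith

lemma one_div_le_of_mem_Icc {b N x : ℝ} (hb : 0 < b) (hbx : b ≤ x) (hxN : x ≤ N) :
    1 / x ≤ (b + N - x) / (b * N) := by
  rw [div_le_div_iff₀ (by linarith) (by nlinarith)]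
  nlinarith [mul_nonneg (sub_nonneg.2 hbx) (sub_nonneg.2 hxN)]

lemma sum_fin_eq_sum_range_add_nsmul {M : Type*} [AddCommMonoid M] {k n : ℕ} (hkn : k ≤ n)
    (f : ℕ → M) {c : M} (hf : ∀ i ≥ k, f i = c) :
    ∑ i : Fin n, f i = ∑ i ∈ range k, f i + (n - k) • c := by
  rw [Fin.sum_univ_eq_sum_range, ← sum_range_add_sum_Ico _ hkn,
    sum_congr rfl fun i hi => hf i (mem_Ico.1 hi).1, sum_const, Nat.card_Ico]

namespace SimpleGraph

variable {V : Type*} (G : SimpleGraph V)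

lemma ncard_neighborSet_eq_degree (v : V) [Fintype (G.neighborSet v)] :
    (G.neighborSet v).ncard = G.degree v := by
  rw [Set.ncard_eq_toFinset_card']
  rfl

lemma sum_ncard_neighborSet [Fintype V] :
    ∑ v, (G.neighborSet v).ncard = 2 * G.edgeSet.ncard := by
  classical
  simp only [ncard_neighborSet_eq_degree, sum_degrees_eq_twice_card_edges, ← coe_edgeFinset,
    Set.ncard_coe_finset]

lemma ncard_neighborSet_eq_card_of_adj_iff {n : ℕ} {G : SimpleGraph (Fin n)} {v : Fin n}
    {S : Finset ℕ} (hS : ∀ i ∈ S, i < n) (h : ∀ u : Fin n, G.Adj v u ↔ ↑u ∈ S) :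
    (G.neighborSet v).ncard = #S := by
  rw [show G.neighborSet v = Fin.val ⁻¹' S from Set.ext h,
    Set.ncard_preimage_of_injective_subset_range Fin.val_injective, Set.ncard_coe_finset]
  exact fun i hi => ⟨⟨i, hS i hi⟩, rfl⟩

variable [Fintype V] [DecidableRel G.Adj]

theorem le_sum_one_div_degree (hdeg : ∀ v, 1 ≤ G.degree v) :
    (5 * Fintype.card V - 2 * #G.edgeFinset : ℝ) / 6 ≤ ∑ v, 1 / (G.degree v : ℝ) := by
  have hsum : ∑ v, (G.degree v : ℝ) = 2 * #G.edgeFinset := by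
    exact_mod_cast G.sum_degrees_eq_twice_card_edges
  calc (5 * Fintype.card V - 2 * #G.edgeFinset : ℝ) / 6 = ∑ v, (5 - G.degree v : ℝ) / 6 := by
        rw [← sum_div, sum_sub_distrib, hsum]; simp [mul_comm]
    _ ≤ _ := sum_le_sum fun v _ => five_sub_div_six_le_one_div (hdeg v)

theorem sum_degree_le_card_mul_add_sum_compl [DecidableEq V] (s : Finset V) :
    ∑ v ∈ s, G.degree v ≤ #s * (#s - 1) + ∑ v ∈ sᶜ, G.degree v := by
  have hsplit : ∀ v ∈ s, G.degree v
      = #{w ∈ s | G.Adj v w} + #(sᶜ.bipartiteAbove G.Adj v) := by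
    intro v _
    rw [← card_neighborFinset_eq_degree, neighborFinset_eq_filter, bipartiteAbove, card_filter,
      card_filter, card_filter, sum_add_sum_compl]
  have hinner : ∀ v ∈ s, #{w ∈ s | G.Adj v w} ≤ #s - 1 := by
    intro v hv
    rw [← card_erase_of_mem hv]
    exact card_le_card fun w hw => by
      simp only [mem_filter] at hw
      exact mem_erase.2 ⟨(G.ne_of_adj hw.2).symm, hw.1⟩
  have hcross : ∑ v ∈ s, #(sᶜ.bipartiteAbove G.Adj v) ≤ ∑ v ∈ sᶜ, G.degree v := by
    rw [sum_card_bipartiteAbove_eq_sum_card_bipartiteBelow]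
    exact sum_le_sum fun w _ => card_le_card fun v hv => by
      simp only [bipartiteBelow, mem_filter] at hv
      exact (G.mem_neighborFinset w v).2 hv.2.symm
  calc ∑ v ∈ s, G.degree v
      = ∑ v ∈ s, #{w ∈ s | G.Adj v w} + ∑ v ∈ s, #(sᶜ.bipartiteAbove G.Adj v) := by
        rw [← sum_add_distrib]; exact sum_congr rfl hsplit
    _ ≤ ∑ _v ∈ s, (#s - 1) + ∑ v ∈ sᶜ, G.degree v := add_le_add (sum_le_sum hinner) hcross
    _ = #s * (#s - 1) + ∑ v ∈ sᶜ, G.degree v := by rw [sum_const, smul_eq_mul]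

theorem sum_one_div_degree_le_of_le_degree (s : Finset V) {b : ℕ} (hb : 0 < b)
    (h : ∀ v ∈ s, b ≤ G.degree v) :
    ∑ v ∈ s, 1 / (G.degree v : ℝ)
      ≤ (#s * (b + (Fintype.card V - 1)) - ∑ v ∈ s, (G.degree v : ℝ))
          / (b * (Fintype.card V - 1)) := by
  have hle : ∀ v, (G.degree v : ℝ) ≤ Fintype.card V - 1 := fun v => by
    rw [le_sub_iff_add_le]
    exact_mod_cast G.degree_lt_card_verts v
  calc ∑ v ∈ s, 1 / (G.degree v : ℝ)
      ≤ ∑ v ∈ s, (b + (Fintype.card V - 1) - G.degree v : ℝ) / (b * (Fintype.card V - 1)) :=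
        sum_le_sum fun v hv =>
          one_div_le_of_mem_Icc (by exact_mod_cast hb) (by exact_mod_cast h v hv) (hle v)
    _ = _ := by rw [← sum_div, sum_sub_distrib, sum_const, nsmul_eq_mul]

section Leaves

variable [DecidableEq V] {G} {C : Finset V}

lemma sum_degree_add_card_compl (hleaf : ∀ v ∈ Cᶜ, G.degree v = 1) :
    ∑ v ∈ C, G.degree v + #Cᶜ = 2 * #G.edgeFinset := by
  rw [← sum_degrees_eq_twice_card_edges, ← sum_add_sum_compl C, sum_congr rfl hleaf, sum_const,
    smul_eq_mul, mul_one]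

lemma four_le_card_of_degree_compl_eq_one (hleaf : ∀ v ∈ Cᶜ, G.degree v = 1)
    (hE : #G.edgeFinset = Fintype.card V + 2) : 4 ≤ #C := by
  have hsum := sum_degree_add_card_compl hleaf
  have hle := G.sum_degree_le_card_mul_add_sum_compl C
  have hcard := card_add_card_compl C
  rw [sum_congr rfl hleaf, sum_const, smul_eq_mul, mul_one] at hle
  by_contra! h
  interval_cases #C <;> omega

lemma three_le_degree_of_card_eq_four (hleaf : ∀ v ∈ Cᶜ, G.degree v = 1)
    (hE : #G.edgeFinset = Fintype.card V + 2) (h4 : #C = 4) {v : V} (hv : v ∈ C) :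
    3 ≤ G.degree v := by
  have hsum := sum_degree_add_card_compl hleaf
  have hle := G.sum_degree_le_card_mul_add_sum_compl (C.erase v)
  have hcard := card_add_card_compl C
  rw [card_erase_of_mem hv, h4, compl_erase, sum_insert (by simpa using hv),
    sum_congr rfl hleaf, sum_const, smul_eq_mul, mul_one] at hle
  have := sum_erase_add C (fun v => G.degree v) hv
  omega

lemma sum_one_div_degree_eq_card_compl_add (hleaf : ∀ v ∈ Cᶜ, G.degree v = 1) :
    ∑ v, 1 / (G.degree v : ℝ) = #Cᶜ + ∑ v ∈ C, 1 / (G.degree v : ℝ) := by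
  have hleaf' : ∀ v ∈ Cᶜ, 1 / (G.degree v : ℝ) = 1 := fun v hv => by simp [hleaf v hv]
  rw [← sum_add_sum_compl C, add_comm, sum_congr rfl hleaf', sum_const, nsmul_one]

end Leaves

theorem sum_one_div_degree_le (hdeg : ∀ v, 1 ≤ G.degree v)
    (hE : #G.edgeFinset = Fintype.card V + 2) :
    ∑ v, 1 / (G.degree v : ℝ) ≤ (Fintype.card V - 3 : ℝ) + 1 / (Fintype.card V - 1) := by
  classical
  set n := Fintype.card V
  set C : Finset V := {v | G.degree v ≠ 1}
  have hleaf : ∀ v ∈ Cᶜ, G.degree v = 1 := by simp [C]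
  have hcore : ∀ v ∈ C, 2 ≤ G.degree v := fun v hv => by
    have := hdeg v
    simp only [C, mem_filter, mem_univ, true_and] at hv
    omega
  have hC4 := four_le_card_of_degree_compl_eq_one hleaf hE
  have hk : #C + #Cᶜ = n := card_add_card_compl C
  have hS : ∑ v ∈ C, (G.degree v : ℝ) = n + 4 + #C := by
    have h := sum_degree_add_card_compl hleaf
    rw [hE, ← hk] at h
    have h' : ∑ v ∈ C, (G.degree v : ℝ) + #Cᶜ = 2 * (#C + #Cᶜ + 2) := by exact_mod_cast h
    rw [← hk]
    push_cast
    linarith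
  have hn : (4 : ℝ) ≤ n := by exact_mod_cast hC4.trans (card_le_univ C)
  have hn1 : (n - 1 : ℝ) ≠ 0 := by linarith
  rw [sum_one_div_degree_eq_card_compl_add hleaf, show (#Cᶜ : ℝ) = n - #C by
    rw [← hk]; push_cast; ring]
  rcases hC4.eq_or_lt with h4 | h5
  · have hC := G.sum_one_div_degree_le_of_le_degree C (b := 3) (by norm_num)
      fun v hv => three_le_degree_of_card_eq_four hleaf hE h4.symm hv
    rw [hS, ← h4] at hC
    rw [← h4]
    push_cast at hC ⊢
    have hchord : (4 * (3 + (n - 1)) - (n + 4 + 4)) / (3 * (n - 1)) = 1 + 1 / (n - 1 : ℝ) := by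
      field_simp
      ring
    linarith
  · have hC := G.sum_one_div_degree_le_of_le_degree C (b := 2) (by norm_num) hcore
    rw [hS] at hC
    push_cast at hC
    have hm : (5 : ℝ) ≤ #C := by exact_mod_cast h5
    have hchord : (#C * (2 + (n - 1)) - (n + 4 + #C)) / (2 * (n - 1))
        = (#C - 3 + 1 / (n - 1)) - ((#C - 5) * (n - 2) + 2) / (2 * (n - 1) : ℝ) := by
      field_simp
      ring
    have hgap : 0 ≤ ((#C - 5) * (n - 2) + 2) / (2 * (n - 1) : ℝ) := by
      apply div_nonneg <;> nlinarith
    linarith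

end SimpleGraph

def cycleWithChords (n : ℕ) : SimpleGraph (Fin n) :=
  fromRel fun u v => u.val + 1 = v.val ∨ (u.val = 0 ∧ (v.val = n - 1 ∨ v.val = 2)) ∨
    (u.val = 1 ∧ v.val = 3)

def pendantK4 (n : ℕ) : SimpleGraph (Fin n) :=
  fromRel fun u v => u.val = 0 ∨ (u.val < 4 ∧ v.val < 4)

variable {n : ℕ}

lemma two_mul_ncard_edgeSet_of_ncard_neighborSet {G : SimpleGraph (Fin n)} {d : ℕ → ℕ}
    {k c : ℕ} (hkn : k ≤ n) (hd : ∀ v : Fin n, (G.neighborSet v).ncard = d v)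
    (hc : ∀ i ≥ k, d i = c) :
    2 * G.edgeSet.ncard = ∑ i ∈ range k, d i + (n - k) * c := by
  rw [← G.sum_ncard_neighborSet, ← smul_eq_mul, ← sum_fin_eq_sum_range_add_nsmul hkn d hc]
  simp [hd]

lemma inverseDegree_of_ncard_neighborSet {G : SimpleGraph (Fin n)} {d : ℕ → ℕ}
    {k c : ℕ} (hkn : k ≤ n) (hd : ∀ v : Fin n, (G.neighborSet v).ncard = d v)
    (hc : ∀ i ≥ k, d i = c) :
    inverseDegree G = ∑ i ∈ range k, 1 / (d i : ℝ) + (n - k : ℕ) / (c : ℝ) := by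
  rw [div_eq_mul_one_div, ← nsmul_eq_mul,
    ← sum_fin_eq_sum_range_add_nsmul hkn _ fun i hi => by rw [hc i hi]]
  simp [inverseDegree, hd]

lemma ncard_neighborSet_cycleWithChords (hn : 5 ≤ n) (v : Fin n) :
    ((cycleWithChords n).neighborSet v).ncard = if (v : ℕ) < 4 then 3 else 2 := by
  have hv := v.isLt
  have hcases : v.val = 0 ∨ v.val = 1 ∨ v.val = 2 ∨ v.val = 3 ∨
      (4 ≤ v.val ∧ v.val + 1 < n) ∨ v.val + 1 = n := by omega
  have nbhd := @ncard_neighborSet_eq_card_of_adj_iff n (cycleWithChords n) v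
  rcases hcases with h | h | h | h | h | h
  <;> [rw [if_pos (by omega), nbhd (S := {1, 2, n - 1})];
    rw [if_pos (by omega), nbhd (S := {0, 2, 3})];
    rw [if_pos (by omega), nbhd (S := {0, 1, 3})];
    rw [if_pos (by omega), nbhd (S := {1, 2, 4})];
    rw [if_neg (by omega), nbhd (S := {v.val - 1, v.val + 1})];
    rw [if_neg (by omega), nbhd (S := {0, n - 2})]]
  -- left in each case: `Adj v u ↔ ↑u ∈ S`, `∀ i ∈ S, i < n` and the value of `#S`
  <;> first
    | (intro u; have := u.isLt; simp [cycleWithChords, Fin.ext_iff]; omega)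
    | (simp <;> omega)
    | (rw [card_pair]; omega)
    | (rw [card_insert_of_notMem, card_pair] <;> simp <;> omega)

lemma ncard_neighborSet_pendantK4 (hn : 5 ≤ n) (v : Fin n) :
    ((pendantK4 n).neighborSet v).ncard =
      if (v : ℕ) = 0 then n - 1 else if (v : ℕ) < 4 then 3 else 1 := by
  have hv := v.isLt
  have hcases : v.val = 0 ∨ v.val = 1 ∨ v.val = 2 ∨ v.val = 3 ∨ 4 ≤ v.val := by omega
  have nbhd := @ncard_neighborSet_eq_card_of_adj_iff n (pendantK4 n) v
  rcases hcases with h | h | h | h | h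
  <;> [rw [if_pos h, nbhd (S := Ioo 0 n)];
    rw [if_neg (by omega), if_pos (by omega), nbhd (S := {0, 2, 3})];
    rw [if_neg (by omega), if_pos (by omega), nbhd (S := {0, 1, 3})];
    rw [if_neg (by omega), if_pos (by omega), nbhd (S := {0, 1, 2})];
    rw [if_neg (by omega), if_neg (by omega), nbhd (S := {0})]]
  <;> first
    | (intro u; have := u.isLt; simp [pendantK4, Fin.ext_iff]; omega)
    | (simp <;> omega)

lemma connected_cycleWithChords (hn : n ≠ 0) : (cycleWithChords n).Connected := by
  obtain ⟨m, rfl⟩ := Nat.exists_eq_succ_of_ne_zero hn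
  refine (pathGraph_connected m).mono fun u v huv => ?_
  rw [pathGraph_adj] at huv
  simp only [cycleWithChords, fromRel_adj, ne_eq, Fin.ext_iff]
  omega

lemma connected_pendantK4 (hn : n ≠ 0) : (pendantK4 n).Connected := by
  rw [connected_iff_exists_forall_reachable]
  refine ⟨⟨0, Nat.pos_of_ne_zero hn⟩, fun w => ?_⟩
  by_cases hw : w.val = 0
  · rw [show w = ⟨0, Nat.pos_of_ne_zero hn⟩ from Fin.ext hw]
  · exact Adj.reachable (by simp [pendantK4, Fin.ext_iff]; omega)

lemma ncard_edgeSet_cycleWithChords (hn : 5 ≤ n) :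
    (cycleWithChords n).edgeSet.ncard = n + 2 := by
  have h := two_mul_ncard_edgeSet_of_ncard_neighborSet (d := fun i => if i < 4 then 3 else 2)
    (k := 4) (by omega) (ncard_neighborSet_cycleWithChords hn) fun i hi => if_neg (by omega)
  simp [sum_range_succ] at h
  omega

lemma ncard_edgeSet_pendantK4 (hn : 5 ≤ n) : (pendantK4 n).edgeSet.ncard = n + 2 := by
  have h := two_mul_ncard_edgeSet_of_ncard_neighborSet
    (d := fun i => if i = 0 then n - 1 else if i < 4 then 3 else 1) (k := 4) (by omega)
    (ncard_neighborSet_pendantK4 hn) fun i hi => by rw [if_neg (by omega), if_neg (by omega)]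
  simp [sum_range_succ] at h
  omega

lemma inverseDegree_cycleWithChords (hn : 5 ≤ n) :
    inverseDegree (cycleWithChords n) = ((n : ℝ) - 4) / 2 + 4 / 3 := by
  rw [inverseDegree_of_ncard_neighborSet (d := fun i => if i < 4 then 3 else 2) (k := 4)
    (by omega) (ncard_neighborSet_cycleWithChords hn) fun i hi => if_neg (by omega)]
  simp [sum_range_succ, Nat.cast_sub (by omega : 4 ≤ n)]
  ring

lemma inverseDegree_pendantK4 (hn : 5 ≤ n) :
    inverseDegree (pendantK4 n) = ((n : ℝ) - 3) + 1 / ((n : ℝ) - 1) := by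
  rw [inverseDegree_of_ncard_neighborSet
    (d := fun i => if i = 0 then n - 1 else if i < 4 then 3 else 1) (k := 4) (by omega)
    (ncard_neighborSet_pendantK4 hn) fun i hi => by rw [if_neg (by omega), if_neg (by omega)]]
  simp [sum_range_succ, Nat.cast_sub (by omega : 4 ≤ n), Nat.cast_sub (by omega : 1 ≤ n)]
  ring

/-- Bounds for the inverse degree of a tricyclic graph:
`(n-4)/2 + 4/3 ≤ ρ(G) ≤ (n-3) + 1/(n-1)`, with the lower bound attained by a
tricyclic graph with degree sequence `(3^4, 2^{n-4})` and the upper bound by a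
tricyclic graph with degree sequence `(n-1, 3^3, 1^{n-4})`. -/
theorem tricyclic_inverse_degree_bounds (n : ℕ) (hn : 5 ≤ n)
    (G : SimpleGraph (Fin n)) (hconn : G.Connected)
    (hedges : G.edgeSet.ncard = n + 2) :
    (((n : ℝ) - 4) / 2 + 4 / 3 ≤ inverseDegree G ∧
      inverseDegree G ≤ ((n : ℝ) - 3) + 1 / ((n : ℝ) - 1)) ∧
    (∃ H : SimpleGraph (Fin n), H.Connected ∧ H.edgeSet.ncard = n + 2 ∧
      IsDegreeSequence H (fun i => if i < 4 then 3 else 2) ∧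
      inverseDegree H = ((n : ℝ) - 4) / 2 + 4 / 3) ∧
    (∃ H : SimpleGraph (Fin n), H.Connected ∧ H.edgeSet.ncard = n + 2 ∧
      IsDegreeSequence H
        (fun i => if i = 0 then n - 1 else if i < 4 then 3 else 1) ∧
      inverseDegree H = ((n : ℝ) - 3) + 1 / ((n : ℝ) - 1)) := by
  classical
  have : Nontrivial (Fin n) := Fin.nontrivial_iff_two_le.2 (by omega)
  have hdeg : ∀ v, 1 ≤ G.degree v := fun v => hconn.preconnected.degree_pos_of_nontrivial v
  have hE : #G.edgeFinset = Fintype.card (Fin n) + 2 := by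
    rwa [Fintype.card_fin, ← Set.ncard_coe_finset, coe_edgeFinset]
  have hρ : inverseDegree G = ∑ v, 1 / (G.degree v : ℝ) := by
    simp [inverseDegree, ncard_neighborSet_eq_degree]
  refine ⟨⟨?_, ?_⟩,
    ⟨cycleWithChords n, connected_cycleWithChords (by omega), ncard_edgeSet_cycleWithChords hn,
      ⟨Equiv.refl _, ncard_neighborSet_cycleWithChords hn⟩, inverseDegree_cycleWithChords hn⟩,
    ⟨pendantK4 n, connected_pendantK4 (by omega), ncard_edgeSet_pendantK4 hn,
      ⟨Equiv.refl _, ncard_neighborSet_pendantK4 hn⟩, inverseDegree_pendantK4 hn⟩⟩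
  · have := G.le_sum_one_div_degree hdeg
    rw [hE, Fintype.card_fin] at this
    rw [hρ]
    push_cast at this
    linarith
  · simpa [hρ] using G.sum_one_div_degree_le hdeg hE
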